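/- Let f : ℝ → [0,∞) be continuous with v_f(θ,x) < ∞ for all (θ,x) ∈ [0,T0]×ℝ, where T0 > 0. Suppose there exists a continuous function θ̆ : ℝ → [0,T0] such that am_{T0}(f)(x) = v_f(θ̆(x), x) for every x ∈ ℝ, i.e. the infimum defining am_{T0}(f) is attained at θ̆(x). Then the function x ↦ am_{T0}(f)(x) is continuous on ℝ. -/

import Mathlib

open MeasureTheory Filter Set
open scoped ENNReal

/-- Gaussian density with mean `m` and variance `s2`. -/
noncomputable def gauss (m s2 y : ℝ) : ℝ :=
  (Real.sqrt (2 * Real.pi * s2))⁻¹ * Real.exp (-((y - m) ^ 2) / (2 * s2))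

/-- European value of a payoff function `f`:
`v_f(θ,x) = e^{-rθ} ∫ N(x+r̂θ,σ²θ,y) f(y) dy` for `θ > 0`, `v_f(0,x) = f(x)`. -/
noncomputable def vEu (r σ : ℝ) (f : ℝ → ℝ) (θ x : ℝ) : ℝ :=
  if θ = 0 then f x
  else Real.exp (-(r * θ)) * ∫ y, gauss (x + (r - σ ^ 2 / 2) * θ) (σ ^ 2 * θ) y * f y

/-!
The European value is `e^{-rθ}` times the Gaussian smoothing `gaussConv f (x + r̂θ) (σ²θ)`.
For positive variance this smoothing is jointly continuous in (mean, variance) by dominated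
convergence: Gaussians of variance at most `S` whose means lie in a compact interval are dominated
by a multiple of the sum of the two Gaussians of variance `S` centred at the endpoints. As the
variance tends to `0` and the mean to `x₀`, the smoothing tends to `f x₀`: near `x₀` one uses the
continuity of `f`, while away from `x₀` the density of variance `s2` is bounded by a factor that
tends to `0` times the density of variance `S`. Hence `v_f` is continuous on `[0, T0] × ℝ`, and
`am_{T0}(f)(x) = v_f(θ̆(x), x)` is a composition of continuous maps.
-/

open Real Topology Function

noncomputable def gaussConv (f : ℝ → ℝ) (m s2 : ℝ) : ℝ :=
  ∫ y, gauss m s2 y * f y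

lemma gauss_nonneg (m s2 y : ℝ) : 0 ≤ gauss m s2 y := by
  unfold gauss; positivity

lemma gauss_eq_gaussianPDFReal (m : ℝ) {s2 : ℝ} (hs : 0 ≤ s2) :
    gauss m s2 = ProbabilityTheory.gaussianPDFReal m ⟨s2, hs⟩ := by
  ext y; simp [gauss, ProbabilityTheory.gaussianPDFReal]; rfl

lemma integrable_gauss (m : ℝ) {s2 : ℝ} (hs : 0 ≤ s2) : Integrable (gauss m s2) := by
  rw [gauss_eq_gaussianPDFReal m hs]
  exact ProbabilityTheory.integrable_gaussianPDFReal m _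

lemma integral_gauss (m : ℝ) {s2 : ℝ} (hs : 0 < s2) : ∫ y, gauss m s2 y = 1 := by
  rw [gauss_eq_gaussianPDFReal m hs.le]
  exact ProbabilityTheory.integral_gaussianPDFReal_eq_one m
    fun h => hs.ne' (congrArg (fun x : NNReal => (x : ℝ)) h)

lemma continuous_gauss (m s2 : ℝ) : Continuous (gauss m s2) := by
  unfold gauss; fun_prop

lemma continuousAt_gauss_uncurry (y : ℝ) {p : ℝ × ℝ} (hp : 0 < p.2) :
    ContinuousAt (fun p : ℝ × ℝ => gauss p.1 p.2 y) p := by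
  unfold gauss
  have : √(2 * π * p.2) ≠ 0 := by positivity
  fun_prop (disch := positivity)

lemma gauss_eq_mul_gauss (m y : ℝ) {s2 S : ℝ} (hs : 0 < s2) (hS : 0 < S) :
    gauss m s2 y = √(S / s2) * exp (-(y - m) ^ 2 * (1 / (2 * s2) - 1 / (2 * S))) * gauss m S y := by
  have hsqrt : (√(2 * π * s2))⁻¹ = √(S / s2) * (√(2 * π * S))⁻¹ := by
    rw [← sqrt_inv, ← sqrt_inv, ← sqrt_mul (by positivity)]
    congr 1
    field_simp [pi_pos.ne']
  have hexp : exp (-(y - m) ^ 2 / (2 * s2)) =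
      exp (-(y - m) ^ 2 * (1 / (2 * s2) - 1 / (2 * S))) * exp (-(y - m) ^ 2 / (2 * S)) := by
    rw [← exp_add]; congr 1; field_simp; ring
  simp only [gauss]
  rw [hsqrt, hexp]
  ring

lemma gauss_le_mul_gauss_of_le_abs {m s2 S y δ : ℝ} (hs : 0 < s2) (hle : s2 ≤ S) (hδ : 0 ≤ δ)
    (hy : δ ≤ |y - m|) :
    gauss m s2 y ≤ √(S / s2) * exp (-δ ^ 2 * (1 / (2 * s2) - 1 / (2 * S))) * gauss m S y := by
  rw [gauss_eq_mul_gauss m y hs (hs.trans_le hle)]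
  have hk : 0 ≤ 1 / (2 * s2) - 1 / (2 * S) := sub_nonneg.2 (by gcongr)
  have hsq : δ ^ 2 ≤ (y - m) ^ 2 := by simpa only [sq_abs] using pow_le_pow_left₀ hδ hy 2
  gcongr ?_ * exp ?_ * _
  · exact gauss_nonneg _ _ _
  · nlinarith

lemma gauss_le_sqrt_mul_gauss {m s2 S : ℝ} (y : ℝ) (hs : 0 < s2) (hle : s2 ≤ S) :
    gauss m s2 y ≤ √(S / s2) * gauss m S y := by
  simpa using gauss_le_mul_gauss_of_le_abs (y := y) (m := m) hs hle le_rfl (abs_nonneg _)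

lemma gauss_le_exp_mul_gauss {m a S y d : ℝ} (hS : 0 < S) (h : (y - a) ^ 2 ≤ (y - m) ^ 2 + d) :
    gauss m S y ≤ exp (d / (2 * S)) * gauss a S y := by
  unfold gauss
  rw [mul_left_comm, ← exp_add]
  gcongr
  rw [← add_div, div_le_div_iff_of_pos_right (by positivity)]
  linarith

lemma gauss_le_of_mem_Icc {m s2 S a b : ℝ} (y : ℝ) (hs : 0 < s2) (hle : s2 ≤ S)
    (ha : a ≤ m) (hb : m ≤ b) :
    gauss m s2 y ≤ √(S / s2) * exp ((b - a) ^ 2 / (2 * S)) * (gauss a S y + gauss b S y) := by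
  have hS := hs.trans_le hle
  have hshift : gauss m S y ≤ exp ((b - a) ^ 2 / (2 * S)) * (gauss a S y + gauss b S y) := by
    rcases le_total y m with hym | hmy
    · have := gauss_le_exp_mul_gauss (m := m) (a := a) (y := y) (d := (b - a) ^ 2) hS
        (by nlinarith)
      nlinarith [exp_pos ((b - a) ^ 2 / (2 * S)), gauss_nonneg b S y]
    · have := gauss_le_exp_mul_gauss (m := m) (a := b) (y := y) (d := (b - a) ^ 2) hS
        (by nlinarith)
      nlinarith [exp_pos ((b - a) ^ 2 / (2 * S)), gauss_nonneg a S y]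
  calc gauss m s2 y ≤ √(S / s2) * gauss m S y := gauss_le_sqrt_mul_gauss y hs hle
    _ ≤ _ := by rw [mul_assoc]; gcongr

lemma tendsto_sqrt_div_mul_exp_nhdsGT_zero {S k : ℝ} (hS : 0 < S) (hk : 0 < k) :
    Tendsto (fun s2 => √(S / s2) * exp (-k * (1 / (2 * s2) - 1 / (2 * S)))) (𝓝[>] 0) (𝓝 0) := by
  have hsqrt : Tendsto (fun u => √u * exp (-(k / 2) * u)) atTop (𝓝 0) := by
    simpa only [sqrt_eq_rpow] using
      tendsto_rpow_mul_exp_neg_mul_atTop_nhds_zero (1 / 2) (k / 2) (by positivity)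
  have := (hsqrt.comp tendsto_inv_nhdsGT_zero).const_mul (√S * exp (k / (2 * S)))
  rw [mul_zero] at this
  refine this.congr' ?_
  filter_upwards [self_mem_nhdsWithin] with s2 (hs2 : 0 < s2)
  rw [div_eq_mul_inv S s2, sqrt_mul hS.le,
    show -k * (1 / (2 * s2) - 1 / (2 * S)) = k / (2 * S) + -(k / 2) * s2⁻¹ by field_simp; ring,
    exp_add]
  simp only [comp_apply]
  ring

lemma abs_gauss_mul (m s2 y c : ℝ) : |gauss m s2 y * c| = gauss m s2 y * |c| := by
  rw [abs_mul, abs_of_nonneg (gauss_nonneg _ _ _)]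

section gaussConv

variable {f : ℝ → ℝ}

lemma integrable_gauss_mul_of_le {m s2 S : ℝ} (hf : AEStronglyMeasurable f)
    (hint : Integrable (fun y => gauss m S y * f y)) (hs : 0 < s2) (hle : s2 ≤ S) :
    Integrable (fun y => gauss m s2 y * f y) := by
  refine (hint.norm.const_mul √(S / s2)).mono'
    ((continuous_gauss m s2).aestronglyMeasurable.mul hf) (ae_of_all _ fun y => ?_)
  simp only [norm_mul, Real.norm_of_nonneg (gauss_nonneg _ _ _), ← mul_assoc]
  exact mul_le_mul_of_nonneg_right (gauss_le_sqrt_mul_gauss y hs hle) (norm_nonneg _)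

theorem continuousOn_uncurry_gaussConv {S : ℝ} (hf : AEStronglyMeasurable f)
    (hint : ∀ m, Integrable (fun y => gauss m S y * f y)) :
    ContinuousOn (uncurry (gaussConv f)) (univ ×ˢ Ioc 0 S) := by
  rintro ⟨m0, s0⟩ ⟨-, hs0 : 0 < s0, hs0S : s0 ≤ S⟩
  set a := m0 - 1
  set b := m0 + 1
  set C := √(2 * S / s0) * exp ((b - a) ^ 2 / (2 * S))
  have hnear : ∀ᶠ p in 𝓝[univ ×ˢ Ioc 0 S] (m0, s0),
      p.1 ∈ Icc a b ∧ s0 / 2 ≤ p.2 ∧ p.2 ≤ S := by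
    have h1 : ∀ᶠ p in 𝓝 (m0, s0), p.1 ∈ Icc a b ∧ s0 / 2 ≤ p.2 :=
      ((continuous_fst.tendsto _).eventually (Icc_mem_nhds (by linarith) (by linarith))).and
        ((continuous_snd.tendsto _).eventually (eventually_ge_nhds (by linarith)))
    filter_upwards [nhdsWithin_le_nhds h1, self_mem_nhdsWithin] with p hp hps
    exact ⟨hp.1, hp.2, hps.2.2⟩
  show ContinuousWithinAt (fun p : ℝ × ℝ => ∫ y, gauss p.1 p.2 y * f y) _ _
  refine continuousWithinAt_of_dominated
    (bound := fun y => C * (‖gauss a S y * f y‖ + ‖gauss b S y * f y‖))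
    (Eventually.of_forall fun p => (continuous_gauss _ _).aestronglyMeasurable.mul hf) ?_
    (((hint a).norm.add (hint b).norm).const_mul C)
    (ae_of_all _ fun y =>
      ((continuousAt_gauss_uncurry y hs0).mul continuousAt_const).continuousWithinAt)
  filter_upwards [hnear] with p ⟨⟨ha, hb⟩, hp2, hpS⟩
  refine ae_of_all _ fun y => ?_
  have hp : 0 < p.2 := by linarith
  have hsqrt : √(S / p.2) ≤ √(2 * S / s0) :=
    sqrt_le_sqrt (by rw [div_le_div_iff₀ hp hs0]; nlinarith)
  simp only [norm_mul, Real.norm_of_nonneg (gauss_nonneg _ _ _)]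
  calc gauss p.1 p.2 y * ‖f y‖
      ≤ √(S / p.2) * exp ((b - a) ^ 2 / (2 * S)) * (gauss a S y + gauss b S y) * ‖f y‖ := by
        gcongr; exact gauss_le_of_mem_Icc y hp hpS ha hb
    _ ≤ C * (gauss a S y + gauss b S y) * ‖f y‖ := by
        have := add_nonneg (gauss_nonneg a S y) (gauss_nonneg b S y)
        gcongr
        exact mul_le_mul_of_nonneg_right hsqrt (exp_pos _).le
    _ = C * (gauss a S y * ‖f y‖ + gauss b S y * ‖f y‖) := by ring

lemma abs_gaussConv_sub_le {m s2 S x0 δ ε : ℝ} (hf : AEStronglyMeasurable f)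
    (hint : Integrable (fun y => gauss m S y * f y)) (hs : 0 < s2) (hle : s2 ≤ S) (hδ : 0 ≤ δ)
    (hm : |m - x0| ≤ δ) (hfδ : ∀ y, |y - x0| ≤ 2 * δ → |f y - f x0| ≤ ε) :
    |gaussConv f m s2 - f x0| ≤ ε + √(S / s2) * exp (-δ ^ 2 * (1 / (2 * s2) - 1 / (2 * S))) *
      (gaussConv (fun y => |f y|) m S + |f x0|) := by
  set η := √(S / s2) * exp (-δ ^ 2 * (1 / (2 * s2) - 1 / (2 * S)))
  have hS := hs.trans_le hle
  have hε : 0 ≤ ε := by simpa using hfδ x0 (by simp [hδ])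
  have hpt : ∀ y, |gauss m s2 y * (f y - f x0)| ≤
      ε * gauss m s2 y + η * (gauss m S y * |f y| + gauss m S y * |f x0|) := by
    intro y
    rw [abs_gauss_mul]
    by_cases hy : |y - x0| ≤ 2 * δ
    · have := mul_nonneg (mul_nonneg (by positivity : 0 ≤ η) (gauss_nonneg m S y))
        (add_nonneg (abs_nonneg (f y)) (abs_nonneg (f x0)))
      nlinarith [mul_le_mul_of_nonneg_left (hfδ y hy) (gauss_nonneg m s2 y)]
    · have hfar : δ ≤ |y - m| := by linarith [abs_sub_le y m x0]
      have := mul_le_mul (gauss_le_mul_gauss_of_le_abs hs hle hδ hfar) (abs_sub (f y) (f x0))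
        (abs_nonneg _) (mul_nonneg (by positivity) (gauss_nonneg m S y))
      nlinarith [mul_nonneg hε (gauss_nonneg m s2 y)]
  have hsub : gaussConv f m s2 - f x0 = ∫ y, gauss m s2 y * (f y - f x0) := by
    simp_rw [mul_sub]
    rw [integral_sub (integrable_gauss_mul_of_le hf hint hs hle)
      ((integrable_gauss m hs.le).mul_const _), integral_mul_const, integral_gauss m hs, one_mul]
    rfl
  have hintS : Integrable (fun y => gauss m S y * |f y|) :=
    hint.abs.congr (ae_of_all _ fun y => abs_gauss_mul m S y (f y))
  have hsum : Integrable (fun y => gauss m S y * |f y| + gauss m S y * |f x0|) :=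
    hintS.add ((integrable_gauss m hS.le).mul_const |f x0|)
  calc |gaussConv f m s2 - f x0| = ‖∫ y, gauss m s2 y * (f y - f x0)‖ := by
        rw [hsub, Real.norm_eq_abs]
    _ ≤ ∫ y, (ε * gauss m s2 y + η * (gauss m S y * |f y| + gauss m S y * |f x0|)) :=
        norm_integral_le_of_norm_le
          (((integrable_gauss m hs.le).const_mul ε).add (hsum.const_mul η))
          (ae_of_all _ hpt)
    _ = ε + η * (gaussConv (fun y => |f y|) m S + |f x0|) := by
        rw [integral_add ((integrable_gauss m hs.le).const_mul ε) (hsum.const_mul η),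
          integral_const_mul, integral_gauss m hs, integral_const_mul,
          integral_add hintS ((integrable_gauss m hS.le).mul_const |f x0|),
          integral_mul_const, integral_gauss m hS, mul_one, one_mul]
        rfl

theorem tendsto_gaussConv_nhdsGT_zero {S x0 : ℝ} (hS : 0 < S) (hf : AEStronglyMeasurable f)
    (hfx : ContinuousAt f x0) (hint : ∀ m, Integrable (fun y => gauss m S y * f y)) :
    Tendsto (uncurry (gaussConv f)) (𝓝 x0 ×ˢ 𝓝[>] 0) (𝓝 (f x0)) := by
  rw [Metric.tendsto_nhds]
  intro ε hε
  obtain ⟨δ, hδ, hfδ⟩ : ∃ δ > 0, ∀ y, |y - x0| ≤ 2 * δ → |f y - f x0| ≤ ε / 2 := by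
    obtain ⟨δ', hδ', h⟩ := Metric.continuousAt_iff.1 hfx (ε / 2) (half_pos hε)
    exact ⟨δ' / 4, by positivity, fun y hy => (h (by rw [Real.dist_eq]; linarith)).le⟩
  have hint_abs (m : ℝ) : Integrable (fun y => gauss m S y * |f y|) :=
    (hint m).abs.congr (ae_of_all _ fun y => abs_gauss_mul m S y (f y))
  have habs : Continuous (fun m => gaussConv (fun y => |f y|) m S) :=
    (continuousOn_uncurry_gaussConv (by simpa only [Real.norm_eq_abs] using hf.norm)
      hint_abs).comp_continuous (continuous_id.prodMk continuous_const)
      fun _ => ⟨trivial, hS, le_rfl⟩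
  have htail : Tendsto (fun p : ℝ × ℝ =>
      √(S / p.2) * exp (-δ ^ 2 * (1 / (2 * p.2) - 1 / (2 * S))) *
        (gaussConv (fun y => |f y|) p.1 S + |f x0|)) (𝓝 x0 ×ˢ 𝓝[>] 0) (𝓝 0) := by
    simpa using ((tendsto_sqrt_div_mul_exp_nhdsGT_zero hS (pow_pos hδ 2)).comp tendsto_snd).mul
      (((habs.tendsto x0).comp tendsto_fst).add_const |f x0|)
  filter_upwards [htail.eventually (gt_mem_nhds (half_pos hε)),
    tendsto_fst.eventually (Metric.closedBall_mem_nhds x0 hδ),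
    tendsto_snd.eventually (Ioc_mem_nhdsGT hS)] with p hp hm hs
  rw [Real.dist_eq]
  have := abs_gaussConv_sub_le hf (hint p.1) hs.1 hs.2 hδ.le (by simpa [Real.dist_eq] using hm) hfδ
  exact this.trans_lt (by linarith)

end gaussConv

lemma vEu_zero (r σ : ℝ) (f : ℝ → ℝ) (x : ℝ) : vEu r σ f 0 x = f x := if_pos rfl

lemma vEu_of_ne_zero (r σ : ℝ) (f : ℝ → ℝ) {θ : ℝ} (x : ℝ) (hθ : θ ≠ 0) :
    vEu r σ f θ x = exp (-(r * θ)) * gaussConv f (x + (r - σ ^ 2 / 2) * θ) (σ ^ 2 * θ) :=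
  if_neg hθ

section vEu

variable {r σ T0 : ℝ} {f : ℝ → ℝ}

lemma continuousOn_vEu_Ioc (hσ : σ ≠ 0) (hf : AEStronglyMeasurable f)
    (hint : ∀ m, Integrable (fun y => gauss m (σ ^ 2 * T0) y * f y)) :
    ContinuousOn (uncurry (vEu r σ f)) (Ioc 0 T0 ×ˢ univ) := by
  have hmaps : MapsTo (fun p : ℝ × ℝ => (p.2 + (r - σ ^ 2 / 2) * p.1, σ ^ 2 * p.1))
      (Ioc 0 T0 ×ˢ univ) (univ ×ˢ Ioc 0 (σ ^ 2 * T0)) := fun p ⟨⟨hp0, hpT⟩, _⟩ =>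
    ⟨trivial, by positivity, mul_le_mul_of_nonneg_left hpT (sq_nonneg σ)⟩
  refine ContinuousOn.congr ?_ fun p hp => vEu_of_ne_zero r σ f p.2 hp.1.1.ne'
  exact (continuous_exp.comp (by fun_prop)).continuousOn.mul
    ((continuousOn_uncurry_gaussConv hf hint).comp (by fun_prop : Continuous _).continuousOn hmaps)

lemma tendsto_vEu_nhdsWithin_Ioc (hσ : σ ≠ 0) (hT0 : 0 < T0) (hf : Continuous f)
    (hint : ∀ m, Integrable (fun y => gauss m (σ ^ 2 * T0) y * f y)) (x0 : ℝ) :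
    Tendsto (uncurry (vEu r σ f)) (𝓝[Ioc 0 T0 ×ˢ univ] (0, x0)) (𝓝 (f x0)) := by
  have hlim {g : ℝ × ℝ → ℝ} {c : ℝ} (hg : Continuous g) (hc : g (0, x0) = c) :
      Tendsto g (𝓝[Ioc 0 T0 ×ˢ univ] (0, x0)) (𝓝 c) :=
    hc ▸ (hg.tendsto _).mono_left nhdsWithin_le_nhds
  have hpos : ∀ᶠ p in 𝓝[Ioc 0 T0 ×ˢ univ] ((0 : ℝ), x0), 0 < p.1 := by
    filter_upwards [self_mem_nhdsWithin] with p hp using hp.1.1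
  have hmap : Tendsto (fun p : ℝ × ℝ => (p.2 + (r - σ ^ 2 / 2) * p.1, σ ^ 2 * p.1))
      (𝓝[Ioc 0 T0 ×ˢ univ] (0, x0)) (𝓝 x0 ×ˢ 𝓝[>] 0) := by
    refine Tendsto.prodMk ?_ (tendsto_nhdsWithin_iff.2 ⟨?_, ?_⟩)
    · exact hlim (by fun_prop) (by simp)
    · exact hlim (by fun_prop) (by simp)
    · filter_upwards [hpos] with p hp
      exact mul_pos (by positivity) hp
  have := (hlim (g := fun p => exp (-(r * p.1))) (c := 1) (by fun_prop) (by simp)).mul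
    ((tendsto_gaussConv_nhdsGT_zero (by positivity) hf.aestronglyMeasurable hf.continuousAt
      hint).comp hmap)
  rw [one_mul] at this
  refine this.congr' ?_
  filter_upwards [hpos] with p hp using (vEu_of_ne_zero r σ f p.2 hp.ne').symm

theorem continuousOn_vEu (hσ : σ ≠ 0) (hT0 : 0 < T0) (hf : Continuous f)
    (hint : ∀ m, Integrable (fun y => gauss m (σ ^ 2 * T0) y * f y)) :
    ContinuousOn (uncurry (vEu r σ f)) (Icc 0 T0 ×ˢ univ) := by
  rintro ⟨θ0, x0⟩ ⟨⟨hθ0, hθ0T⟩, -⟩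
  rcases hθ0.eq_or_lt with rfl | hpos
  · rw [← Ioc_insert_left hT0.le, ← singleton_union, union_prod, continuousWithinAt_union]
    constructor
    · refine (hf.comp continuous_snd).continuousWithinAt.congr (fun p ⟨hp1, _⟩ => ?_)
        (vEu_zero r σ f x0)
      show vEu r σ f p.1 p.2 = f p.2
      rw [mem_singleton_iff.1 hp1, vEu_zero]
    · rw [ContinuousWithinAt, uncurry_apply_pair, vEu_zero]
      exact tendsto_vEu_nhdsWithin_Ioc hσ hT0 hf hint x0
  · refine ((continuousOn_vEu_Ioc hσ hf.aestronglyMeasurable hint) _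
      ⟨⟨hpos, hθ0T⟩, trivial⟩).mono_of_mem_nhdsWithin (mem_nhdsWithin.2
        ⟨Ioi 0 ×ˢ univ, isOpen_Ioi.prod isOpen_univ, ⟨hpos, trivial⟩,
          fun p hp => ⟨⟨hp.1.1, hp.2.1.2⟩, trivial⟩⟩)

end vEu

theorem embedded_American_continuous_general
    (r σ T0 : ℝ) (hσ : 0 < σ) (hT0 : 0 < T0)
    (f : ℝ → ℝ) (hfc : Continuous f)
    (hfint : ∀ θ ∈ Set.Ioc (0 : ℝ) T0, ∀ x : ℝ,
      Integrable (fun y => gauss (x + (r - σ ^ 2 / 2) * θ) (σ ^ 2 * θ) y * f y))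
    (θbr : ℝ → ℝ) (hθc : Continuous θbr) (hθmem : ∀ x, θbr x ∈ Set.Icc (0 : ℝ) T0)
    (hmin : ∀ x : ℝ, (⨅ θ : Set.Icc (0 : ℝ) T0, vEu r σ f θ.1 x) = vEu r σ f (θbr x) x) :
    Continuous (fun x => ⨅ θ : Set.Icc (0 : ℝ) T0, vEu r σ f θ.1 x) := by
  have hint : ∀ m, Integrable (fun y => gauss m (σ ^ 2 * T0) y * f y) := fun m => by
    have := hfint T0 ⟨hT0, le_rfl⟩ (m - (r - σ ^ 2 / 2) * T0)
    rwa [sub_add_cancel] at this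
  rw [funext hmin]
  exact (continuousOn_vEu hσ.ne' hT0 hfc hint).comp_continuous (hθc.prodMk continuous_id)
    fun x => ⟨hθmem x, trivial⟩

/-- If `f` is a continuous nonnegative payoff with finite
European values on `[0,T0] × ℝ` and the infimum defining the embedded American
option `am_{T0}(f)` is attained at a continuous curve `θ̆`, then
`x ↦ am_{T0}(f)(x)` is continuous. -/
theorem embedded_American_continuous
    (r σ T0 : ℝ) (hr : 0 ≤ r) (hσ : 0 < σ) (hT0 : 0 < T0)
    (f : ℝ → ℝ) (hfc : Continuous f) (hf0 : ∀ x, 0 ≤ f x)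
    (hfint : ∀ θ ∈ Set.Ioc (0 : ℝ) T0, ∀ x : ℝ,
      Integrable (fun y => gauss (x + (r - σ ^ 2 / 2) * θ) (σ ^ 2 * θ) y * f y))
    (θbr : ℝ → ℝ) (hθc : Continuous θbr) (hθmem : ∀ x, θbr x ∈ Set.Icc (0 : ℝ) T0)
    (hmin : ∀ x : ℝ, (⨅ θ : Set.Icc (0 : ℝ) T0, vEu r σ f θ.1 x) = vEu r σ f (θbr x) x) :
    Continuous (fun x => ⨅ θ : Set.Icc (0 : ℝ) T0, vEu r σ f θ.1 x) :=
  embedded_American_continuous_general r σ T0 hσ hT0 f hfc hfint θbr hθc hθmem hmin
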